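/- arXiv:1107.5075 — 2 statements merged into one kernel-verified Lean document; each statement's English description precedes it below -/
import Mathlib

section
/- Every convex continuous function f on [a,b] with f(a) = f(b) = 0 can be uniformly approximated by convex twice continuously differentiable functions g satisfying g(a) = g(b) = 0 and g''(a) = g''(b) = 0. -/
/-!
Interpolate `f` linearly on a uniform grid `a = x₀ < ⋯ < xₙ = b` of step `δ`, fine enough for
uniform continuity. The interpolant is an affine function plus `∑ cᵢ (x - xᵢ)₊` over the
interior nodes, with kink weights `cᵢ = sᵢ - sᵢ₋₁ ≥ 0` by convexity. Replacing the hinge `(·)₊`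
by a convex `C²` cubic spline that agrees with it outside `(-h, h)`, `h ≤ δ`, keeps convexity,
moves the function by at most `h ∑ |cᵢ|`, and changes nothing near the endpoints, where the
interpolant is affine: there the values stay `f a = f b = 0` and the second derivative vanishes.
-/

open Set Filter Topology

theorem hasDerivAt_max_zero_pow (n : ℕ) (x : ℝ) :
    HasDerivAt (fun y : ℝ => max 0 y ^ (n + 2)) ((n + 2) * max 0 x ^ (n + 1)) x := by
  have hpow : ∀ x : ℝ, HasDerivAt (fun y : ℝ => y ^ (n + 2)) ((n + 2) * x ^ (n + 1)) x :=
    fun x => by simpa using hasDerivAt_pow (n + 2) x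
  rcases lt_trichotomy x 0 with hx | rfl | hx
  · have hloc : (fun _ : ℝ => (0 : ℝ)) =ᶠ[𝓝 x] fun y => max 0 y ^ (n + 2) := by
      filter_upwards [eventually_lt_nhds hx] with y hy
      simp [hy.le]
    simpa [hx.le] using (hasDerivAt_const x (0 : ℝ)).congr_of_eventuallyEq hloc.symm
  · have hneg : HasDerivWithinAt (fun y : ℝ => max 0 y ^ (n + 2)) 0 (Iic 0) 0 :=
      (hasDerivWithinAt_const (0 : ℝ) _ (0 : ℝ)).congr (fun y hy => by simp [mem_Iic.1 hy])
        (by simp)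
    have hpos : HasDerivWithinAt (fun y : ℝ => max 0 y ^ (n + 2)) 0 (Ici 0) 0 :=
      ((hpow 0).hasDerivWithinAt.congr (fun y hy => by simp [mem_Ici.1 hy]) (by simp)).congr_deriv
        (by simp)
    simpa using (hneg.union hpos).hasDerivAt (by simp)
  · have hloc : (fun y : ℝ => y ^ (n + 2)) =ᶠ[𝓝 x] fun y => max 0 y ^ (n + 2) := by
      filter_upwards [eventually_gt_nhds hx] with y hy
      simp [hy.le]
    simpa [hx.le] using (hpow x).congr_of_eventuallyEq hloc.symm

theorem contDiff_max_zero_pow (n : ℕ) : ContDiff ℝ n (fun x : ℝ => max 0 x ^ (n + 1)) := by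
  induction n with
  | zero => simpa using continuous_const.max continuous_id
  | succ n ih =>
    have hderiv : deriv (fun x : ℝ => max 0 x ^ (n + 2)) =
        fun x : ℝ => ((n : ℝ) + 2) * max 0 x ^ (n + 1) :=
      funext fun x => (hasDerivAt_max_zero_pow n x).deriv
    rw [Nat.cast_succ, contDiff_succ_iff_deriv, hderiv]
    exact ⟨fun x => (hasDerivAt_max_zero_pow n x).differentiableAt, by simp,
      contDiff_const.mul ih⟩

def secondDiff (φ : ℝ → ℝ) (h x : ℝ) : ℝ := φ (x + h) - 2 * φ x + φ (x - h)

theorem hasDerivAt_secondDiff {φ φ' : ℝ → ℝ} (hφ : ∀ x, HasDerivAt φ (φ' x) x) (h x : ℝ) :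
    HasDerivAt (secondDiff φ h) (secondDiff φ' h x) x :=
  (((hφ (x + h)).comp_add_const x h).sub ((hφ x).const_mul 2)).add
    ((hφ (x - h)).comp_sub_const x h)

theorem ContDiff.secondDiff {n : WithTop ℕ∞} {φ : ℝ → ℝ} (hφ : ContDiff ℝ n φ) (h : ℝ) :
    ContDiff ℝ n (secondDiff φ h) :=
  ((hφ.comp (contDiff_id.add contDiff_const)).sub (contDiff_const.mul hφ)).add
    (hφ.comp (contDiff_id.sub contDiff_const))

theorem ConvexOn.secondDiff_nonneg {φ : ℝ → ℝ} (hφ : ConvexOn ℝ univ φ) (h x : ℝ) :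
    0 ≤ secondDiff φ h x := by
  have hmid := hφ.2 (mem_univ (x + h)) (mem_univ (x - h)) (by norm_num : (0 : ℝ) ≤ 1 / 2)
    (by norm_num : (0 : ℝ) ≤ 1 / 2) (by norm_num)
  simp only [smul_eq_mul] at hmid
  rw [show 1 / 2 * (x + h) + 1 / 2 * (x - h) = x by ring] at hmid
  unfold secondDiff
  linarith

theorem secondDiff_max_zero_of_le_abs {h x : ℝ} (hh : 0 ≤ h) (hx : h ≤ |x|) :
    secondDiff (max 0) h x = 0 := by
  unfold secondDiff
  rcases le_abs'.1 hx with hx | hx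
  · rw [max_eq_left (by linarith), max_eq_left (by linarith), max_eq_left (by linarith)]; ring
  · rw [max_eq_right (by linarith), max_eq_right (by linarith), max_eq_right (by linarith)]; ring

/-- The cubic B-spline smoothing of the hinge `max 0`: its second derivative is the hat function
`secondDiff (max 0) h · / h ^ 2`, supported on `[-h, h]`. -/
noncomputable def smoothRamp (h x : ℝ) : ℝ := secondDiff (fun y => max 0 y ^ 3) h x / (6 * h ^ 2)

theorem smoothRamp_eq_max_zero {h x : ℝ} (hh : 0 < h) (hx : h ≤ |x|) :
    smoothRamp h x = max 0 x := by
  simp only [smoothRamp, secondDiff]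
  rcases le_abs'.1 hx with hx | hx
  · rw [max_eq_left (by linarith), max_eq_left (by linarith), max_eq_left (by linarith)]; simp
  · rw [max_eq_right (by linarith), max_eq_right (by linarith), max_eq_right (by linarith)]
    field_simp
    ring

theorem abs_smoothRamp_sub_max_zero_le {h : ℝ} (hh : 0 < h) (x : ℝ) :
    |smoothRamp h x - max 0 x| ≤ h := by
  rcases le_or_gt h |x| with hx | hx
  · simpa [smoothRamp_eq_max_zero hh hx] using hh.le
  obtain ⟨hlo, hhi⟩ := abs_lt.1 hx
  have hcube : smoothRamp h x - max 0 x = (h - |x|) ^ 3 / (6 * h ^ 2) := by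
    simp only [smoothRamp, secondDiff]
    rw [max_eq_left (show x - h ≤ 0 by linarith), max_eq_right (show 0 ≤ x + h by linarith)]
    rcases le_total x 0 with hx0 | hx0
    · rw [max_eq_left hx0, abs_of_nonpos hx0]; field_simp; ring
    · rw [max_eq_right hx0, abs_of_nonneg hx0]; field_simp; ring
  have hpos : 0 ≤ h - |x| := by linarith
  rw [hcube, abs_of_nonneg (by positivity), div_le_iff₀ (by positivity)]
  nlinarith [pow_le_pow_left₀ hpos (show h - |x| ≤ h by linarith [abs_nonneg x]) 3]

theorem contDiff_smoothRamp (h : ℝ) : ContDiff ℝ 2 (smoothRamp h) :=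
  ((contDiff_max_zero_pow 2).secondDiff h).div_const _

theorem iteratedDeriv_two_smoothRamp (h x : ℝ) :
    iteratedDeriv 2 (smoothRamp h) x = secondDiff (max 0) h x / h ^ 2 := by
  have h3 : ∀ x, HasDerivAt (fun y : ℝ => max 0 y ^ 3) (3 * max 0 x ^ 2) x := fun x => by
    convert hasDerivAt_max_zero_pow 1 x using 1; norm_num
  have h2 : ∀ x, HasDerivAt (fun y : ℝ => 3 * max 0 y ^ 2) (6 * max 0 x) x := fun x =>
    ((hasDerivAt_max_zero_pow 0 x).const_mul 3).congr_deriv (by norm_num; ring)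
  have hd1 : deriv (smoothRamp h) =
      fun x => secondDiff (fun y => 3 * max 0 y ^ 2) h x / (6 * h ^ 2) :=
    funext fun x => ((hasDerivAt_secondDiff h3 h x).div_const _).deriv
  rw [iteratedDeriv_succ, iteratedDeriv_one, hd1,
    ((hasDerivAt_secondDiff h2 h x).div_const _).deriv]
  simp only [secondDiff]
  field_simp

theorem convexOn_smoothRamp (h : ℝ) : ConvexOn ℝ univ (smoothRamp h) := by
  have hmax : ConvexOn ℝ univ (max 0 : ℝ → ℝ) :=
    (convexOn_const 0 convex_univ).sup (convexOn_id convex_univ)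
  refine convexOn_univ_of_deriv2_nonneg ((contDiff_smoothRamp h).differentiable (by norm_num))
    ?_ fun x => ?_
  · simpa using (contDiff_smoothRamp h).differentiable_iteratedDeriv 1 (by norm_num)
  · rw [← iteratedDeriv_eq_iterate, iteratedDeriv_two_smoothRamp]
    exact div_nonneg (hmax.secondDiff_nonneg h x) (sq_nonneg h)

theorem iteratedDeriv_two_smoothRamp_of_le_abs {h x : ℝ} (hh : 0 ≤ h) (hx : h ≤ |x|) :
    iteratedDeriv 2 (smoothRamp h) x = 0 := by
  rw [iteratedDeriv_two_smoothRamp, secondDiff_max_zero_of_le_abs hh hx, zero_div]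

def gridPt (a δ : ℝ) (i : ℕ) : ℝ := a + i * δ

noncomputable def gridSlope (f : ℝ → ℝ) (a δ : ℝ) (i : ℕ) : ℝ :=
  (f (gridPt a δ (i + 1)) - f (gridPt a δ i)) / δ

noncomputable def slopeJump (f : ℝ → ℝ) (a δ : ℝ) (i : ℕ) : ℝ :=
  gridSlope f a δ i - gridSlope f a δ (i - 1)

/-- For `φ = max 0` this is the piecewise linear interpolant of `f` at `gridPt a δ i`, `i ≤ n`,
written as an affine function plus one hinge per interior node, weighted by the jump of the
chord slope there. -/
noncomputable def hingeInterp (φ f : ℝ → ℝ) (a δ : ℝ) (n : ℕ) (x : ℝ) : ℝ :=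
  f a + gridSlope f a δ 0 * (x - a) +
    ∑ i ∈ Finset.Ico 1 n, slopeJump f a δ i * φ (x - gridPt a δ i)

section Grid

variable {a δ : ℝ}

theorem gridPt_zero : gridPt a δ 0 = a := by simp [gridPt]

theorem gridPt_succ (i : ℕ) : gridPt a δ (i + 1) = gridPt a δ i + δ := by
  simp only [gridPt]; push_cast; ring

theorem gridPt_succ_sub (i : ℕ) : gridPt a δ (i + 1) - gridPt a δ i = δ := by
  rw [gridPt_succ]; ring

theorem gridPt_mono (hδ : 0 ≤ δ) : Monotone (gridPt a δ) := fun i j hij => by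
  unfold gridPt
  gcongr

theorem gridPt_strictMono (hδ : 0 < δ) : StrictMono (gridPt a δ) := fun i j hij => by
  unfold gridPt
  gcongr

theorem gridPt_mem_Icc (hδ : 0 ≤ δ) {i n : ℕ} (hi : i ≤ n) :
    gridPt a δ i ∈ Icc a (gridPt a δ n) :=
  ⟨le_add_of_nonneg_right (by positivity), gridPt_mono hδ hi⟩

theorem le_abs_gridPt_sub (hδ : 0 ≤ δ) {i j : ℕ} (hij : i ≠ j) :
    δ ≤ |gridPt a δ i - gridPt a δ j| := by
  have hone : (1 : ℝ) ≤ |(i : ℝ) - j| := by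
    have hne : (i : ℤ) - j ≠ 0 := sub_ne_zero.2 (by exact_mod_cast hij)
    exact_mod_cast Int.one_le_abs hne
  rw [show gridPt a δ i - gridPt a δ j = ((i : ℝ) - j) * δ by simp only [gridPt]; ring, abs_mul,
    abs_of_nonneg hδ]
  nlinarith

theorem exists_mem_Icc_gridPt {n : ℕ} (hn : 0 < n) {x : ℝ}
    (hx : x ∈ Icc a (gridPt a δ n)) :
    ∃ j < n, x ∈ Icc (gridPt a δ j) (gridPt a δ (j + 1)) := by
  classical
  have hlast : x ≤ gridPt a δ (n - 1 + 1) := by rw [Nat.sub_add_cancel hn]; exact hx.2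
  have hP : ∃ j, x ≤ gridPt a δ (j + 1) := ⟨n - 1, hlast⟩
  refine ⟨Nat.find hP, (Nat.find_min' hP hlast).trans_lt (Nat.sub_lt hn one_pos), ?_,
    Nat.find_spec hP⟩
  · rcases Nat.eq_zero_or_eq_succ_pred (Nat.find hP) with h0 | hsucc
    · rw [h0, gridPt_zero]; exact hx.1
    · have := Nat.find_min hP (show (Nat.find hP).pred < Nat.find hP by omega)
      rw [hsucc]
      exact (not_le.1 this).le

theorem gridSlope_mul (f : ℝ → ℝ) (hδ : δ ≠ 0) (i : ℕ) :
    gridSlope f a δ i * δ = f (gridPt a δ (i + 1)) - f (gridPt a δ i) :=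
  div_mul_cancel₀ _ hδ

theorem add_sum_slopeJump_mul (f : ℝ → ℝ) (hδ : δ ≠ 0) (j : ℕ) (x : ℝ) :
    f a + gridSlope f a δ 0 * (x - a) +
        ∑ i ∈ Finset.Ico 1 (j + 1), slopeJump f a δ i * (x - gridPt a δ i) =
      f (gridPt a δ j) + gridSlope f a δ j * (x - gridPt a δ j) := by
  induction j with
  | zero => simp [gridPt_zero]
  | succ j ih =>
    have hstep := gridSlope_mul (a := a) f hδ j
    rw [Finset.sum_Ico_succ_top (by omega), ← add_assoc, ih, slopeJump, Nat.add_sub_cancel]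
    rw [gridPt_succ] at hstep ⊢
    linear_combination hstep

end Grid

section HingeInterp

variable {φ ψ f : ℝ → ℝ} {a δ : ℝ} {n : ℕ}

theorem hingeInterp_max_zero_of_mem (hδ : 0 < δ) {j : ℕ} (hj : j < n) {x : ℝ}
    (hx : x ∈ Icc (gridPt a δ j) (gridPt a δ (j + 1))) :
    hingeInterp (max 0) f a δ n x = f (gridPt a δ j) + gridSlope f a δ j * (x - gridPt a δ j) := by
  have hlow : ∀ i ∈ Finset.Ico 1 (j + 1), slopeJump f a δ i * max 0 (x - gridPt a δ i) =
      slopeJump f a δ i * (x - gridPt a δ i) := fun i hi => by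
    rw [max_eq_right (sub_nonneg.2 <|
      (gridPt_mono hδ.le (Nat.lt_succ_iff.1 (Finset.mem_Ico.1 hi).2)).trans hx.1)]
  have hhigh : ∀ i ∈ Finset.Ico (j + 1) n, slopeJump f a δ i * max 0 (x - gridPt a δ i) = 0 :=
    fun i hi => by
      rw [max_eq_left (sub_nonpos.2 <| hx.2.trans (gridPt_mono hδ.le (Finset.mem_Ico.1 hi).1)),
        mul_zero]
  rw [hingeInterp, ← Finset.sum_Ico_consecutive _ (by omega : 1 ≤ j + 1) hj,
    Finset.sum_congr rfl hlow, Finset.sum_eq_zero hhigh, add_zero,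
    add_sum_slopeJump_mul f hδ.ne']

theorem hingeInterp_max_zero_gridPt (hδ : 0 < δ) (hn : 0 < n) {j : ℕ} (hj : j ≤ n) :
    hingeInterp (max 0) f a δ n (gridPt a δ j) = f (gridPt a δ j) := by
  rcases hj.lt_or_eq with hj | rfl
  · rw [hingeInterp_max_zero_of_mem hδ hj ⟨le_rfl, gridPt_mono hδ.le j.le_succ⟩]
    ring
  · obtain ⟨m, rfl⟩ := Nat.exists_eq_succ_of_ne_zero hn.ne'
    rw [hingeInterp_max_zero_of_mem hδ m.lt_succ_self ⟨gridPt_mono hδ.le m.le_succ, le_rfl⟩,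
      gridPt_succ, add_sub_cancel_left, gridSlope_mul f hδ.ne', gridPt_succ]
    ring

theorem abs_sub_hingeInterp_max_zero_le (hδ : 0 < δ) (hn : 0 < n) {ω : ℝ}
    (hf : ∀ y ∈ Icc a (gridPt a δ n), ∀ z ∈ Icc a (gridPt a δ n), |y - z| ≤ δ → |f y - f z| ≤ ω)
    {x : ℝ} (hx : x ∈ Icc a (gridPt a δ n)) :
    |f x - hingeInterp (max 0) f a δ n x| ≤ 2 * ω := by
  obtain ⟨j, hj, hxj⟩ := exists_mem_Icc_gridPt hn hx
  have hmem : ∀ i ≤ n, gridPt a δ i ∈ Icc a (gridPt a δ n) := fun _ => gridPt_mem_Icc hδ.le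
  have hcell := gridPt_succ_sub (a := a) (δ := δ) j
  have hfx : |f x - f (gridPt a δ j)| ≤ ω :=
    hf x hx _ (hmem j hj.le) (by rw [abs_of_nonneg (by linarith [hxj.1])]; linarith [hxj.2])
  have hchord : |f (gridPt a δ (j + 1)) - f (gridPt a δ j)| ≤ ω :=
    hf _ (hmem _ hj) _ (hmem j hj.le) (by rw [gridPt_succ_sub, abs_of_pos hδ])
  have hlin : |gridSlope f a δ j * (x - gridPt a δ j)| ≤
      |f (gridPt a δ (j + 1)) - f (gridPt a δ j)| := by
    rw [gridSlope, abs_mul, abs_div, abs_of_pos hδ, abs_of_nonneg (sub_nonneg.2 hxj.1),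
      div_mul_eq_mul_div, div_le_iff₀ hδ]
    exact mul_le_mul_of_nonneg_left (by linarith [hxj.2]) (abs_nonneg _)
  rw [hingeInterp_max_zero_of_mem hδ hj hxj, ← sub_sub]
  exact (abs_sub _ _).trans (by linarith)

theorem slopeJump_nonneg (hf : ConvexOn ℝ (Icc a (gridPt a δ n)) f) (hδ : 0 < δ) {i : ℕ}
    (hi : i ∈ Finset.Ico 1 n) : 0 ≤ slopeJump f a δ i := by
  obtain ⟨hi1, hin⟩ := Finset.mem_Ico.1 hi
  obtain ⟨j, rfl⟩ := Nat.exists_eq_add_of_le' hi1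
  have hmem : ∀ i ≤ n, gridPt a δ i ∈ Icc a (gridPt a δ n) := fun _ => gridPt_mem_Icc hδ.le
  have := hf.slope_mono_adjacent (y := gridPt a δ (j + 1)) (hmem j (by omega))
    (hmem (j + 1 + 1) (by omega)) (gridPt_strictMono hδ j.lt_succ_self)
    (gridPt_strictMono hδ (j + 1).lt_succ_self)
  rw [gridPt_succ_sub, gridPt_succ_sub] at this
  simpa [slopeJump, gridSlope] using this

theorem convexOn_hingeInterp (hφ : ConvexOn ℝ univ φ) (hf : ConvexOn ℝ (Icc a (gridPt a δ n)) f)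
    (hδ : 0 < δ) : ConvexOn ℝ univ (hingeInterp φ f a δ n) := by
  have haff : ConvexOn ℝ univ fun x => f a + gridSlope f a δ 0 * (x - a) :=
    ((LinearMap.mul ℝ ℝ (gridSlope f a δ 0)).convexOn convex_univ).add_const
      (f a - gridSlope f a δ 0 * a) |>.congr fun x _ => by simp; ring
  have hsum : ConvexOn ℝ univ
      (∑ i ∈ Finset.Ico 1 n, fun x => slopeJump f a δ i * φ (x - gridPt a δ i)) :=
    Finset.sum_induction _ (ConvexOn ℝ univ) (fun _ _ => ConvexOn.add)
      (convexOn_const 0 convex_univ)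
      fun i hi => (hφ.translate_left (-gridPt a δ i)).smul (slopeJump_nonneg hf hδ hi)
  rw [Finset.sum_fn] at hsum
  exact haff.add hsum

theorem contDiff_hingeInterp {k : WithTop ℕ∞} (hφ : ContDiff ℝ k φ) :
    ContDiff ℝ k (hingeInterp φ f a δ n) := by
  unfold hingeInterp
  fun_prop

theorem iteratedDeriv_hingeInterp {k : ℕ} (hk : 2 ≤ k) (hφ : ContDiff ℝ k φ) (x : ℝ) :
    iteratedDeriv k (hingeInterp φ f a δ n) x =
      ∑ i ∈ Finset.Ico 1 n, slopeJump f a δ i * iteratedDeriv k φ (x - gridPt a δ i) := by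
  have hlin : iteratedDeriv k (fun y => y - a) x = 0 := by
    simp only [iteratedDeriv_comp_sub_const k (fun y => y) a, iteratedDeriv_fun_id]
    rw [if_neg (by omega), if_neg (by omega)]
  unfold hingeInterp
  rw [iteratedDeriv_fun_add (by fun_prop) (by fun_prop), iteratedDeriv_const_add (by omega),
    iteratedDeriv_const_mul_field, iteratedDeriv_fun_sum (fun i _ => by fun_prop)]
  simp [iteratedDeriv_comp_sub_const, hlin]

theorem hingeInterp_congr {x : ℝ}
    (h : ∀ i ∈ Finset.Ico 1 n, φ (x - gridPt a δ i) = ψ (x - gridPt a δ i)) :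
    hingeInterp φ f a δ n x = hingeInterp ψ f a δ n x := by
  unfold hingeInterp
  rw [Finset.sum_congr rfl fun i hi => by rw [h i hi]]

theorem abs_hingeInterp_sub_hingeInterp_le {η : ℝ} (h : ∀ y, |φ y - ψ y| ≤ η) (x : ℝ) :
    |hingeInterp φ f a δ n x - hingeInterp ψ f a δ n x| ≤
      η * ∑ i ∈ Finset.Ico 1 n, |slopeJump f a δ i| := by
  unfold hingeInterp
  rw [add_sub_add_left_eq_sub, ← Finset.sum_sub_distrib, Finset.mul_sum]
  refine (Finset.abs_sum_le_sum_abs _ _).trans (Finset.sum_le_sum fun i _ => ?_)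
  rw [← mul_sub, abs_mul, mul_comm]
  exact mul_le_mul_of_nonneg_right (h _) (abs_nonneg _)

end HingeInterp

section SmoothInterp

variable {f : ℝ → ℝ} {a δ h : ℝ} {n j : ℕ}

theorem hingeInterp_smoothRamp_gridPt (hn : 0 < n) (hh : 0 < h) (hhδ : h ≤ δ) (hjn : j ≤ n)
    (hj : j ∉ Finset.Ico 1 n) :
    hingeInterp (smoothRamp h) f a δ n (gridPt a δ j) = f (gridPt a δ j) := by
  have hδ : 0 < δ := hh.trans_le hhδ
  refine (hingeInterp_congr fun i hi => ?_).trans (hingeInterp_max_zero_gridPt hδ hn hjn)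
  exact smoothRamp_eq_max_zero hh <|
    hhδ.trans (le_abs_gridPt_sub hδ.le (ne_of_mem_of_not_mem hi hj).symm)

theorem iteratedDerivWithin_two_hingeInterp_smoothRamp_gridPt (hh : 0 < h) (hhδ : h ≤ δ)
    (hj : j ∉ Finset.Ico 1 n) {s : Set ℝ} (hs : UniqueDiffOn ℝ s) (hjs : gridPt a δ j ∈ s) :
    iteratedDerivWithin 2 (hingeInterp (smoothRamp h) f a δ n) s (gridPt a δ j) = 0 := by
  rw [iteratedDerivWithin_eq_iteratedDeriv hs
    (contDiff_hingeInterp (contDiff_smoothRamp h)).contDiffAt hjs,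
    iteratedDeriv_hingeInterp le_rfl (contDiff_smoothRamp h)]
  refine Finset.sum_eq_zero fun i hi => ?_
  rw [iteratedDeriv_two_smoothRamp_of_le_abs hh.le <|
    hhδ.trans (le_abs_gridPt_sub (hh.le.trans hhδ) (ne_of_mem_of_not_mem hi hj).symm), mul_zero]

theorem exists_abs_hingeInterp_max_zero_sub_smoothRamp_lt (hδ : 0 < δ) {ε : ℝ} (hε : 0 < ε) :
    ∃ h, 0 < h ∧ h ≤ δ ∧ ∀ x,
      |hingeInterp (max 0) f a δ n x - hingeInterp (smoothRamp h) f a δ n x| < ε := by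
  set C := ∑ i ∈ Finset.Ico 1 n, |slopeJump f a δ i|
  have hC : 0 ≤ C := Finset.sum_nonneg fun i _ => abs_nonneg _
  obtain ⟨c, hc, hcC⟩ := exists_pos_mul_lt hε C
  have hh : 0 < min δ c := lt_min hδ hc
  refine ⟨min δ c, hh, min_le_left _ _, fun x => ?_⟩
  rw [abs_sub_comm]
  calc _ ≤ min δ c * C := abs_hingeInterp_sub_hingeInterp_le (abs_smoothRamp_sub_max_zero_le hh) x
    _ ≤ C * c := by rw [mul_comm]; exact mul_le_mul_of_nonneg_left (min_le_right _ _) hC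
    _ < ε := hcC

end SmoothInterp

theorem exists_hingeInterp_max_zero_approx {f : ℝ → ℝ} {a b : ℝ} (hab : a < b)
    (hf : ContinuousOn f (Icc a b)) {ω : ℝ} (hω : 0 < ω) :
    ∃ (n : ℕ) (δ : ℝ), 0 < n ∧ 0 < δ ∧ gridPt a δ n = b ∧
      ∀ x ∈ Icc a b, |f x - hingeInterp (max 0) f a δ n x| ≤ ω := by
  obtain ⟨η, hη, hfη⟩ := Metric.uniformContinuousOn_iff_le.1
    (isCompact_Icc.uniformContinuousOn_of_continuous hf) (ω / 2) (half_pos hω)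
  obtain ⟨n, hn⟩ := exists_nat_gt ((b - a) / η)
  have hn0 : (0 : ℝ) < n := (div_pos (sub_pos.2 hab) hη).trans hn
  have hδ : 0 < (b - a) / n := div_pos (sub_pos.2 hab) hn0
  have hδη : (b - a) / n < η := by
    rw [div_lt_iff₀ hn0]; rwa [div_lt_iff₀ hη, mul_comm] at hn
  have hb : gridPt a ((b - a) / n) n = b := by
    rw [gridPt]; field_simp; ring
  refine ⟨n, (b - a) / n, by exact_mod_cast hn0, hδ, hb, fun x hx => ?_⟩
  rw [← hb] at hx hfη
  have := abs_sub_hingeInterp_max_zero_le hδ (by exact_mod_cast hn0)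
    (fun y hy z hz hyz => hfη y hy z hz (by rw [Real.dist_eq]; linarith)) hx
  linarith

theorem convex_approx_zero_bdry (a b : ℝ) (hab : a < b) (f : ℝ → ℝ)
    (hconv : ConvexOn ℝ (Set.Icc a b) f) (hcont : ContinuousOn f (Set.Icc a b))
    (hfa : f a = 0) (hfb : f b = 0)
    (ε : ℝ) (hε : 0 < ε) :
    ∃ g : ℝ → ℝ, ConvexOn ℝ (Set.Icc a b) g ∧ ContDiffOn ℝ 2 g (Set.Icc a b) ∧
      g a = 0 ∧ g b = 0 ∧
      iteratedDerivWithin 2 g (Set.Icc a b) a = 0 ∧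
      iteratedDerivWithin 2 g (Set.Icc a b) b = 0 ∧
      ∀ x ∈ Set.Icc a b, |f x - g x| < ε := by
  obtain ⟨n, δ, hn, hδ, rfl, hL⟩ := exists_hingeInterp_max_zero_approx hab hcont (half_pos hε)
  obtain ⟨h, hh, hhδ, hLg⟩ :=
    exists_abs_hingeInterp_max_zero_sub_smoothRamp_lt (f := f) (a := a) (n := n) hδ (half_pos hε)
  have h0 : 0 ∉ Finset.Ico 1 n := by simp
  have hn' : n ∉ Finset.Ico 1 n := by simp
  refine ⟨hingeInterp (smoothRamp h) f a δ n,
    (convexOn_hingeInterp (convexOn_smoothRamp h) hconv hδ).subset (subset_univ _) (convex_Icc _ _),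
    (contDiff_hingeInterp (contDiff_smoothRamp h)).contDiffOn, ?_, ?_, ?_, ?_, fun x hx => ?_⟩
  · simpa [gridPt_zero, hfa] using
      hingeInterp_smoothRamp_gridPt (f := f) (a := a) hn hh hhδ n.zero_le h0
  · rw [hingeInterp_smoothRamp_gridPt hn hh hhδ le_rfl hn', hfb]
  · simpa [gridPt_zero] using iteratedDerivWithin_two_hingeInterp_smoothRamp_gridPt (f := f)
      hh hhδ h0 (uniqueDiffOn_Icc hab) (by simpa [gridPt_zero] using left_mem_Icc.2 hab.le)
  · exact iteratedDerivWithin_two_hingeInterp_smoothRamp_gridPt hh hhδ hn' (uniqueDiffOn_Icc hab)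
      (right_mem_Icc.2 hab.le)
  · calc |f x - hingeInterp (smoothRamp h) f a δ n x|
        ≤ |f x - hingeInterp (max 0) f a δ n x| +
          |hingeInterp (max 0) f a δ n x - hingeInterp (smoothRamp h) f a δ n x| :=
          abs_sub_le _ _ _
      _ < ε := by linarith [hL x hx, hLg x]
end

section
/- Let f : [0,1]×[0,1] → ℝ be convex and continuous. Then f can be uniformly approximated by smooth (C^∞) convex functions on [0,1]×[0,1]: for every ε > 0 there is a smooth convex g with sup |f − g| < ε. -/
open Set

noncomputable section ConvexApproxAux

def myClamp (t : ℝ) : ℝ := max 0 (min 1 t)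

lemma myClamp_mem (t : ℝ) : 0 ≤ myClamp t ∧ myClamp t ≤ 1 :=
  ⟨le_max_left _ _, max_le zero_le_one (min_le_left _ _)⟩

lemma myClamp_eq {t : ℝ} (h0 : 0 ≤ t) (h1 : t ≤ 1) : myClamp t = t := by
  unfold myClamp; rw [min_eq_right h1, max_eq_right h0]

lemma myClamp_cont : Continuous myClamp :=
  continuous_const.max (continuous_const.min continuous_id)

lemma convexOn_congr {K : Set (ℝ×ℝ)} {f F : ℝ×ℝ → ℝ} (hf : ConvexOn ℝ K f)
    (h : ∀ x ∈ K, F x = f x) : ConvexOn ℝ K F := by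
  refine ⟨hf.1, fun x hx y hy a b ha hb hab => ?_⟩
  rw [h _ (hf.1 hx hy ha hb hab), h _ hx, h _ hy]
  exact hf.2 hx hy ha hb hab

lemma analyticAt_rlog {x : ℝ} (hx : 0 < x) : AnalyticAt ℝ Real.log x := by
  have h1 : AnalyticAt ℂ Complex.log (Complex.ofRealCLM x) :=
    analyticAt_clog (Complex.ofReal_mem_slitPlane.2 hx)
  have h2 : AnalyticAt ℝ Complex.log (Complex.ofRealCLM x) := h1.restrictScalars
  have h3 : AnalyticAt ℝ (fun y : ℝ => Complex.reCLM (Complex.log (Complex.ofRealCLM y))) x :=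
    (Complex.reCLM.analyticAt _).comp (h2.comp (Complex.ofRealCLM.analyticAt x))
  have he : (fun y : ℝ => Complex.reCLM (Complex.log (Complex.ofRealCLM y))) = Real.log := by
    funext y
    simpa using Complex.log_ofReal_re y
  rwa [he] at h3

lemma lse_step {ι : Type*} (t : Finset ι) (w z : ι → ℝ) {a b : ℝ}
    (ha : 0 < a) (hb : 0 < b) (hab : a + b = 1) :
    ∑ i ∈ t, Real.exp (a * w i + b * z i) ≤
      (∑ i ∈ t, Real.exp (w i)) ^ a * (∑ i ∈ t, Real.exp (z i)) ^ b := by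
  have hpq : (1/a).HolderConjugate (1/b) := by
    constructor
    · rw [one_div, inv_inv, one_div, inv_inv, inv_one]; exact hab
    · positivity
    · positivity
  have H := Real.inner_le_Lp_mul_Lq_of_nonneg t hpq
    (f := fun i => Real.exp (w i) ^ a) (g := fun i => Real.exp (z i) ^ b)
    (fun i _ => Real.rpow_nonneg (Real.exp_pos _).le _)
    (fun i _ => Real.rpow_nonneg (Real.exp_pos _).le _)
  have e1 : ∀ (u c : ℝ), Real.exp u ^ c = Real.exp (c * u) := fun u c => by
    rw [mul_comm, Real.exp_mul]
  have e2 : ∀ (x c : ℝ), 0 < c → 0 < x → (x ^ c) ^ (1/c) = x := fun x c hc hx => by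
    rw [← Real.rpow_mul hx.le, mul_one_div_cancel hc.ne', Real.rpow_one]
  calc ∑ i ∈ t, Real.exp (a * w i + b * z i)
      = ∑ i ∈ t, (Real.exp (w i) ^ a) * (Real.exp (z i) ^ b) := by
        refine Finset.sum_congr rfl fun i _ => ?_
        rw [e1, e1, ← Real.exp_add]
    _ ≤ (∑ i ∈ t, (Real.exp (w i) ^ a) ^ (1/a)) ^ (1/(1/a)) *
        (∑ i ∈ t, (Real.exp (z i) ^ b) ^ (1/b)) ^ (1/(1/b)) := H
    _ = (∑ i ∈ t, Real.exp (w i)) ^ a * (∑ i ∈ t, Real.exp (z i)) ^ b := by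
        rw [one_div_one_div, one_div_one_div]
        congr 1 <;>
        · congr 1
          refine Finset.sum_congr rfl fun i _ => ?_
          exact e2 _ _ (by assumption) (Real.exp_pos _)

end ConvexApproxAux

theorem convex_approx_square (f : ℝ × ℝ → ℝ)
    (hconv : ConvexOn ℝ (Set.Icc ((0:ℝ),(0:ℝ)) (1,1)) f)
    (hcont : ContinuousOn f (Set.Icc ((0:ℝ),(0:ℝ)) (1,1)))
    (ε : ℝ) (hε : 0 < ε) :
    ∃ g : ℝ × ℝ → ℝ, ContDiff ℝ (⊤ : ℕ∞) g ∧
      ConvexOn ℝ (Set.Icc ((0:ℝ),(0:ℝ)) (1,1)) g ∧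
      ∀ x ∈ Set.Icc ((0:ℝ),(0:ℝ)) (1,1), |f x - g x| < ε := by
  set K : Set (ℝ×ℝ) := Set.Icc ((0:ℝ),(0:ℝ)) (1,1) with hKdef
  have hmemK : ∀ p : ℝ×ℝ, p ∈ K ↔ (0 ≤ p.1 ∧ p.1 ≤ 1) ∧ (0 ≤ p.2 ∧ p.2 ≤ 1) := by
    intro p
    simp only [hKdef, Set.mem_Icc, Prod.le_def]
    tauto
  -- continuous extension of f to the plane
  set proj : ℝ×ℝ → ℝ×ℝ := fun p => (myClamp p.1, myClamp p.2) with hproj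
  have hprojK : ∀ p, proj p ∈ K := fun p =>
    (hmemK _).2 ⟨myClamp_mem _, myClamp_mem _⟩
  have hprojid : ∀ p ∈ K, proj p = p := by
    intro p hp
    obtain ⟨⟨h1, h2⟩, h3, h4⟩ := (hmemK p).1 hp
    simp [hproj, myClamp_eq h1 h2, myClamp_eq h3 h4]
  set F : ℝ×ℝ → ℝ := f ∘ proj with hFdef
  have hFeq : ∀ p ∈ K, F p = f p := fun p hp => by
    rw [hFdef, Function.comp_apply, hprojid p hp]
  have hprojcont : Continuous proj :=
    ((myClamp_cont.comp continuous_fst).prodMk (myClamp_cont.comp continuous_snd))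
  have hFcont : Continuous F := hcont.comp_continuous hprojcont hprojK
  have hFconvK : ConvexOn ℝ K F := convexOn_congr hconv hFeq
  -- supporting affine functions
  have hkey : ∀ p : {q : ℝ×ℝ // q ∈ K}, ∃ ℓ : ℝ×ℝ → ℝ,
      (∀ x : ℝ×ℝ, AnalyticAt ℝ ℓ x) ∧
      (∀ (a b : ℝ) (x y : ℝ×ℝ), a + b = 1 → ℓ (a•x + b•y) = a * ℓ x + b * ℓ y) ∧
      (∀ y ∈ K, ℓ y < F y) ∧ F p.1 - ε/2 < ℓ p.1 := by
    rintro ⟨x₀, hx₀⟩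
    set epi : Set ((ℝ×ℝ) × ℝ) := {p | p.1 ∈ K ∧ F p.1 ≤ p.2} with hepi
    have hepiconv : Convex ℝ epi := hFconvK.convex_epigraph
    have hepiclosed : IsClosed epi := by
      have h1 : IsClosed {p : (ℝ×ℝ)×ℝ | p.1 ∈ K} := isClosed_Icc.preimage continuous_fst
      have h2 : IsClosed {p : (ℝ×ℝ)×ℝ | F p.1 ≤ p.2} :=
        isClosed_le (hFcont.comp continuous_fst) continuous_snd
      exact h1.inter h2
    have hp0 : ((x₀, F x₀ - ε/2) : (ℝ×ℝ)×ℝ) ∉ epi := by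
      rintro ⟨-, h⟩
      simp only at h
      linarith
    obtain ⟨l, u, hlp, hl⟩ := geometric_hahn_banach_point_closed hepiconv hepiclosed hp0
    set L : ℝ×ℝ →L[ℝ] ℝ := l.comp (ContinuousLinearMap.inl ℝ (ℝ×ℝ) ℝ) with hL
    set c : ℝ := l (0, 1) with hcdef
    have hdec : ∀ (y : ℝ×ℝ) (s : ℝ), l (y, s) = L y + s * c := by
      intro y s
      have h1 : ((y, s) : (ℝ×ℝ)×ℝ) = (y, 0) + s • ((0:ℝ×ℝ), (1:ℝ)) := by
        simp [Prod.ext_iff]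
      rw [h1, map_add, map_smul, smul_eq_mul]
      rfl
    have hinK : ((x₀, F x₀) : (ℝ×ℝ)×ℝ) ∈ epi := ⟨hx₀, le_refl _⟩
    have h1 := hl _ hinK
    rw [hdec] at h1 hlp
    have hcpos : 0 < c := by nlinarith
    have hinv : 0 < c⁻¹ := inv_pos.2 hcpos
    have hcc : c * c⁻¹ = 1 := mul_inv_cancel₀ hcpos.ne'
    refine ⟨fun x => (u - L x) * c⁻¹, ?_, ?_, ?_, ?_⟩
    · intro x
      exact ((analyticAt_const).sub (L.analyticAt x)).mul analyticAt_const
    · intro a b x y hab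
      simp only [map_add, map_smul, smul_eq_mul]
      linear_combination (-(u * c⁻¹)) * hab
    · intro y hy
      have h2 := hl (y, F y) ⟨hy, le_refl _⟩
      rw [hdec] at h2
      show (u - L y) * c⁻¹ < F y
      rw [← div_eq_mul_inv, div_lt_iff₀ hcpos]
      linarith
    · show F x₀ - ε/2 < (u - L x₀) * c⁻¹
      rw [← div_eq_mul_inv, lt_div_iff₀ hcpos]
      linarith
  choose ℓ hana haff hlt hnear using hkey
  -- finite subcover
  set U : {q : ℝ×ℝ // q ∈ K} → Set (ℝ×ℝ) := fun i => {x | F x - ε/2 < ℓ i x} with hU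
  have hUopen : ∀ i, IsOpen (U i) := fun i =>
    isOpen_lt (hFcont.sub continuous_const)
      (continuous_iff_continuousAt.2 fun x => (hana i x).continuousAt)
  have hcover : K ⊆ ⋃ i, U i := fun x hx => Set.mem_iUnion.2 ⟨⟨x, hx⟩, hnear ⟨x, hx⟩⟩
  obtain ⟨t, ht⟩ := isCompact_Icc.elim_finite_subcover U hUopen hcover
  have h00 : ((0,0) : ℝ×ℝ) ∈ K := (hmemK _).2 (by norm_num)
  have htne : t.Nonempty := by
    obtain ⟨i, hi, -⟩ := Set.mem_iUnion₂.1 (ht h00)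
    exact ⟨i, hi⟩
  set N : ℕ := t.card with hN
  have hN1 : (1:ℝ) ≤ (N:ℝ) := by exact_mod_cast Finset.card_pos.2 htne
  have hlogN : 0 ≤ Real.log N := Real.log_nonneg hN1
  have hN0 : (N:ℝ) ≠ 0 := by linarith
  set τ : ℝ := ε / (2 * (Real.log N + 1)) with hτdef
  have hτ : 0 < τ := div_pos hε (by linarith)
  have hτlog : τ * (Real.log N + 1) = ε/2 := by
    rw [hτdef]
    field_simp
  -- the approximating function
  have hSpos : ∀ x : ℝ×ℝ, 0 < ∑ i ∈ t, Real.exp (ℓ i x * τ⁻¹) :=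
    fun x => Finset.sum_pos (fun i _ => Real.exp_pos _) htne
  refine ⟨fun x => τ * Real.log (∑ i ∈ t, Real.exp (ℓ i x * τ⁻¹)), ?_, ?_, ?_⟩
  · -- analytic hence C^ω
    apply AnalyticOnNhd.contDiff
    intro x _
    apply analyticAt_const.mul
    have hsum : AnalyticAt ℝ (fun z : ℝ×ℝ => ∑ i ∈ t, Real.exp (ℓ i z * τ⁻¹)) x :=
      Finset.analyticAt_fun_sum t fun i _ => ((hana i x).mul analyticAt_const).rexp
    exact AnalyticAt.comp (f := fun z : ℝ×ℝ => ∑ i ∈ t, Real.exp (ℓ i z * τ⁻¹))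
      (analyticAt_rlog (hSpos x)) hsum
  · -- convexity
    refine ⟨convex_Icc _ _, fun x hx y hy a b ha hb hab => ?_⟩
    rcases eq_or_lt_of_le ha with rfl | ha0
    · have hb1 : b = 1 := by linarith
      subst hb1
      simp
    rcases eq_or_lt_of_le hb with rfl | hb0
    · have ha1 : a = 1 := by linarith
      subst ha1
      simp
    have hstep := lse_step t (fun i => ℓ i x * τ⁻¹) (fun i => ℓ i y * τ⁻¹) ha0 hb0 hab
    have hSle : (∑ i ∈ t, Real.exp (ℓ i (a•x + b•y) * τ⁻¹)) ≤
        (∑ i ∈ t, Real.exp (ℓ i x * τ⁻¹))^a * (∑ i ∈ t, Real.exp (ℓ i y * τ⁻¹))^b := by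
      refine le_trans (le_of_eq ?_) hstep
      refine Finset.sum_congr rfl fun i _ => ?_
      rw [haff i a b x y hab]
      ring_nf
    have hlog := mul_le_mul_of_nonneg_left (Real.log_le_log (hSpos _) hSle) hτ.le
    rw [Real.log_mul (Real.rpow_pos_of_pos (hSpos x) a).ne'
      (Real.rpow_pos_of_pos (hSpos y) b).ne',
      Real.log_rpow (hSpos x), Real.log_rpow (hSpos y)] at hlog
    refine le_trans hlog (le_of_eq ?_)
    rw [smul_eq_mul, smul_eq_mul]
    ring
  · -- approximation
    intro x hx
    obtain ⟨i, hit, hxU⟩ := Set.mem_iUnion₂.1 (ht hx)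
    have hxU' : F x - ε/2 < ℓ i x := hxU
    have h1 : Real.exp (ℓ i x * τ⁻¹) ≤ ∑ j ∈ t, Real.exp (ℓ j x * τ⁻¹) :=
      Finset.single_le_sum (f := fun j => Real.exp (ℓ j x * τ⁻¹))
        (fun j _ => (Real.exp_pos _).le) hit
    have h2 : ℓ i x ≤ τ * Real.log (∑ j ∈ t, Real.exp (ℓ j x * τ⁻¹)) := by
      have hll := Real.log_le_log (Real.exp_pos _) h1
      rw [Real.log_exp] at hll
      calc ℓ i x = τ * (ℓ i x * τ⁻¹) := by field_simp
        _ ≤ τ * Real.log (∑ j ∈ t, Real.exp (ℓ j x * τ⁻¹)) :=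
            mul_le_mul_of_nonneg_left hll hτ.le
    have h3 : (∑ j ∈ t, Real.exp (ℓ j x * τ⁻¹)) ≤ N * Real.exp (F x * τ⁻¹) := by
      calc (∑ j ∈ t, Real.exp (ℓ j x * τ⁻¹)) ≤ ∑ _j ∈ t, Real.exp (F x * τ⁻¹) :=
            Finset.sum_le_sum fun j _ => Real.exp_le_exp.2
              (mul_le_mul_of_nonneg_right (hlt j x hx).le (inv_pos.2 hτ).le)
        _ = N * Real.exp (F x * τ⁻¹) := by rw [Finset.sum_const, nsmul_eq_mul]
    have h4 : τ * Real.log (∑ j ∈ t, Real.exp (ℓ j x * τ⁻¹)) ≤ τ * Real.log N + F x := by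
      have l1 : Real.log (∑ j ∈ t, Real.exp (ℓ j x * τ⁻¹)) ≤ Real.log N + F x * τ⁻¹ := by
        calc Real.log (∑ j ∈ t, Real.exp (ℓ j x * τ⁻¹))
            ≤ Real.log (N * Real.exp (F x * τ⁻¹)) := Real.log_le_log (hSpos x) h3
          _ = Real.log N + F x * τ⁻¹ := by
              rw [Real.log_mul hN0 (Real.exp_pos _).ne', Real.log_exp]
      calc τ * Real.log (∑ j ∈ t, Real.exp (ℓ j x * τ⁻¹))
          ≤ τ * (Real.log N + F x * τ⁻¹) := mul_le_mul_of_nonneg_left l1 hτ.le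
        _ = τ * Real.log N + F x := by
            field_simp
    have h5 : τ * Real.log N < ε/2 := by nlinarith
    rw [← hFeq x hx, abs_sub_lt_iff]
    constructor <;> linarith
end
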